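/- Consider a zero-sum semidefinite network game with payoff operators Φ_{ij}. If Λ = (Λ_1,…,Λ_N) is a profile of density matrices and λ ∈ ℝ^N satisfies Σ_{j ∈ N(i)} Φ_{ji}†(Λ_j) ⪰ λ_i I_{n_i} for every i ∈ [N], where Φ_{ji}† is the adjoint of Φ_{ji} with respect to the Frobenius inner product, then Σ_{i=1}^N λ_i ≤ 0. -/

import Mathlib

open Matrix Kronecker BigOperators ComplexOrder

noncomputable section

/-- Frobenius inner product `⟨A, B⟩ = tr(Aᴴ B)`. -/
def frob {α : Type*} [Fintype α] (A B : Matrix α α ℂ) : ℂ := (Aᴴ * B).trace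

/-- A density matrix: positive semidefinite with trace one. -/
def IsDensity {α : Type*} [Fintype α] (X : Matrix α α ℂ) : Prop :=
  X.PosSemidef ∧ X.trace = 1

/-- The payoff operator `Φ_R` associated with a payoff matrix `R`,
defined entrywise by `Φ_R(T)_{a,b} = Σ_{c,d} R_{(a,c),(b,d)} T_{d,c}`. -/
def payoffOp {k m : ℕ} (R : Matrix (Fin k × Fin m) (Fin k × Fin m) ℂ)
    (T : Matrix (Fin m) (Fin m) ℂ) : Matrix (Fin k) (Fin k) ℂ :=
  Matrix.of fun a b => ∑ c, ∑ d, R (a, c) (b, d) * T d c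

/-- The payoff of player `i`: `p_i(X) = Σ_{j ∈ N(i)} ⟨R_{ij}, X_i ⊗ X_j⟩` (a real number). -/
def payoff {N : ℕ} (G : SimpleGraph (Fin N)) [DecidableRel G.Adj] (n : Fin N → ℕ)
    (R : ∀ i j : Fin N, Matrix (Fin (n i) × Fin (n j)) (Fin (n i) × Fin (n j)) ℂ)
    (X : ∀ i, Matrix (Fin (n i)) (Fin (n i)) ℂ) (i : Fin N) : ℝ :=
  (∑ j ∈ G.neighborFinset i, frob (R i j) ((X i) ⊗ₖ (X j))).re

/-- `Φ_i(X) = Σ_{j ∈ N(i)} Φ_{ij}(X_j)`. -/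
def Phi {N : ℕ} (G : SimpleGraph (Fin N)) [DecidableRel G.Adj] (n : Fin N → ℕ)
    (R : ∀ i j : Fin N, Matrix (Fin (n i) × Fin (n j)) (Fin (n i) × Fin (n j)) ℂ)
    (X : ∀ i, Matrix (Fin (n i)) (Fin (n i)) ℂ) (i : Fin N) :
    Matrix (Fin (n i)) (Fin (n i)) ℂ :=
  ∑ j ∈ G.neighborFinset i, payoffOp (R i j) (X j)

/-- Nash equilibrium (best-response) condition for a strategy profile. -/
def IsNash {N : ℕ} (G : SimpleGraph (Fin N)) [DecidableRel G.Adj] (n : Fin N → ℕ)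
    (R : ∀ i j : Fin N, Matrix (Fin (n i) × Fin (n j)) (Fin (n i) × Fin (n j)) ℂ)
    (X : ∀ i, Matrix (Fin (n i)) (Fin (n i)) ℂ) : Prop :=
  ∀ i, ∀ S : Matrix (Fin (n i)) (Fin (n i)) ℂ, IsDensity S →
    payoff G n R (Function.update X i S) i ≤ payoff G n R X i

/-- The largest eigenvalue of a Hermitian matrix (junk value `0` otherwise). -/
def lamMax {k : ℕ} (A : Matrix (Fin k) (Fin k) ℂ) : ℝ :=
  if h : A.IsHermitian then ⨆ i, h.eigenvalues i else 0



/- Pairing `Σ_j Φ_{ji}†(Λ_j) - λ_i I ⪰ 0` with the density matrix `Λ_i` gives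
`λ_i ≤ Re ⟨Λ_i, Σ_j Φ_{ji}†(Λ_j)⟩`. Moving each adjoint back onto the other factor turns
the right-hand side, summed over `i`, into `Σ_j ⟨R_{ji}, Λ_j ⊗ Λ_i⟩ = Σ_j p_j(Λ)`, which
vanishes for a zero-sum game. -/

open scoped MatrixOrder in
lemma Matrix.PosSemidef.trace_mul_nonneg {ι 𝕜 : Type*} [Fintype ι] [DecidableEq ι] [RCLike 𝕜]
    {P Q : Matrix ι ι 𝕜} (hP : P.PosSemidef) (hQ : Q.PosSemidef) : 0 ≤ (P * Q).trace := by
  obtain ⟨B, rfl⟩ := CStarAlgebra.nonneg_iff_eq_star_mul_self.mp hP.nonneg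
  rw [mul_assoc, trace_mul_comm, mul_assoc]
  simpa [mul_assoc, star_eq_conjTranspose] using (hQ.mul_mul_conjTranspose_same B).trace_nonneg

lemma frob_re_symm {α : Type*} [Fintype α] (A B : Matrix α α ℂ) :
    (frob A B).re = (frob B A).re := by
  rw [frob, frob, ← Complex.conj_re, starRingEnd_apply, ← trace_conjTranspose,
    conjTranspose_mul, conjTranspose_conjTranspose]

lemma frob_sum {α ι : Type*} [Fintype α] (A : Matrix α α ℂ) (s : Finset ι)
    (B : ι → Matrix α α ℂ) : frob A (∑ i ∈ s, B i) = ∑ i ∈ s, frob A (B i) := by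
  simp only [frob, Matrix.mul_sum, trace_sum]

lemma frob_kronecker_eq_frob_payoffOp {k m : ℕ} {R : Matrix (Fin k × Fin m) (Fin k × Fin m) ℂ}
    (hR : R.IsHermitian) {S : Matrix (Fin k) (Fin k) ℂ} (hS : S.IsHermitian)
    (T : Matrix (Fin m) (Fin m) ℂ) : frob R (S ⊗ₖ T) = frob S (payoffOp R T) := by
  simp only [frob, trace, diag, mul_apply, conjTranspose_apply, kroneckerMap_apply, payoffOp,
    of_apply, hR.apply, hS.apply, Finset.mul_sum, Fintype.sum_prod_type]
  conv_rhs => rw [Finset.sum_comm]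
  refine Finset.sum_congr rfl fun a _ => ?_
  conv_rhs => rw [Finset.sum_comm]
  exact Finset.sum_congr rfl fun c _ => Finset.sum_congr rfl fun b _ =>
    Finset.sum_congr rfl fun d _ => by ring

lemma le_re_frob_of_posSemidef_sub_smul_one {α : Type*} [Fintype α] [DecidableEq α]
    {X M : Matrix α α ℂ}
    (hX : IsDensity X) {c : ℝ} (hM : (M - (c : ℂ) • 1).PosSemidef) : c ≤ (frob X M).re := by
  have h : 0 ≤ (X * (M - (c : ℂ) • 1)).trace := hX.1.trace_mul_nonneg hM
  rw [mul_sub, Matrix.mul_smul, mul_one, trace_sub, trace_smul, hX.2, ← hX.1.isHermitian.eq] at h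
  simpa [frob, sub_nonneg] using (Complex.le_def.mp h).1

lemma sum_re_frob_adjoint_eq_sum_payoff {N : ℕ} (G : SimpleGraph (Fin N)) [DecidableRel G.Adj]
    (n : Fin N → ℕ)
    {R : ∀ i j : Fin N, Matrix (Fin (n i) × Fin (n j)) (Fin (n i) × Fin (n j)) ℂ}
    (hR : ∀ i j, G.Adj i j → (R i j).IsHermitian)
    {A : ∀ i j : Fin N, Matrix (Fin (n j)) (Fin (n j)) ℂ → Matrix (Fin (n i)) (Fin (n i)) ℂ}
    (hA : ∀ (i j : Fin N) (S : Matrix (Fin (n j)) (Fin (n j)) ℂ)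
      (T : Matrix (Fin (n i)) (Fin (n i)) ℂ), frob (A i j S) T = frob S (payoffOp (R j i) T))
    {Λ : ∀ i, Matrix (Fin (n i)) (Fin (n i)) ℂ} (hΛ : ∀ i, (Λ i).IsHermitian) :
    ∑ i, (frob (Λ i) (∑ j ∈ G.neighborFinset i, A i j (Λ j))).re = ∑ i, payoff G n R Λ i :=
  calc ∑ i, (frob (Λ i) (∑ j ∈ G.neighborFinset i, A i j (Λ j))).re
      = ∑ i, ∑ j ∈ G.neighborFinset i, (frob (R j i) (Λ j ⊗ₖ Λ i)).re := by
        refine Finset.sum_congr rfl fun i _ => ?_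
        rw [frob_sum, Complex.re_sum]
        refine Finset.sum_congr rfl fun j hj => ?_
        have hji : G.Adj j i := ((G.mem_neighborFinset i j).mp hj).symm
        rw [frob_re_symm, hA, frob_kronecker_eq_frob_payoffOp (hR j i hji) (hΛ j)]
    _ = ∑ j, ∑ i ∈ G.neighborFinset j, (frob (R j i) (Λ j ⊗ₖ Λ i)).re :=
        Finset.sum_comm' fun i j => by simp [G.adj_comm]
    _ = ∑ j, payoff G n R Λ j := by simp only [payoff, Complex.re_sum]

/-- `A i j` denotes the Frobenius adjoint `Φ_{ji}†` of the payoff operator `Φ_{ji}`. -/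
theorem stmt10_general {N : ℕ} (G : SimpleGraph (Fin N)) [DecidableRel G.Adj] (n : Fin N → ℕ)
    (R : ∀ i j : Fin N, Matrix (Fin (n i) × Fin (n j)) (Fin (n i) × Fin (n j)) ℂ)
    (hR : ∀ i j, G.Adj i j → (R i j).IsHermitian)
    (hzs : ∀ X : ∀ i, Matrix (Fin (n i)) (Fin (n i)) ℂ,
      (∀ i, IsDensity (X i)) → ∑ i, payoff G n R X i = 0)
    (A : ∀ i j : Fin N,
      Matrix (Fin (n j)) (Fin (n j)) ℂ →ₗ[ℂ] Matrix (Fin (n i)) (Fin (n i)) ℂ)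
    (hA : ∀ (i j : Fin N) (S : Matrix (Fin (n j)) (Fin (n j)) ℂ)
      (T : Matrix (Fin (n i)) (Fin (n i)) ℂ), frob (A i j S) T = frob S (payoffOp (R j i) T))
    (Λ : ∀ i, Matrix (Fin (n i)) (Fin (n i)) ℂ) (hΛ : ∀ i, IsDensity (Λ i))
    (lam : Fin N → ℝ)
    (hlam : ∀ i, ((∑ j ∈ G.neighborFinset i, A i j (Λ j))
      - (lam i : ℂ) • (1 : Matrix (Fin (n i)) (Fin (n i)) ℂ)).PosSemidef) :
    ∑ i, lam i ≤ 0 :=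
  calc ∑ i, lam i
      ≤ ∑ i, (frob (Λ i) (∑ j ∈ G.neighborFinset i, A i j (Λ j))).re :=
        Finset.sum_le_sum fun i _ => le_re_frob_of_posSemidef_sub_smul_one (hΛ i) (hlam i)
    _ = ∑ i, payoff G n R Λ i :=
        sum_re_frob_adjoint_eq_sum_payoff G n hR hA fun i => (hΛ i).1.isHermitian
    _ = 0 := hzs Λ hΛ

/-- in a zero-sum semidefinite network game, if `Λ` is a profile of density
matrices and `Σ_{j ∈ N(i)} Φ_{ji}†(Λ_j) ⪰ λ_i I` for all `i`, then `Σ_i λ_i ≤ 0`.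
Here `A i j` denotes the Frobenius adjoint `Φ_{ji}†` of the payoff operator `Φ_{ji}`. -/
theorem stmt10 {N : ℕ} (G : SimpleGraph (Fin N)) [DecidableRel G.Adj] (n : Fin N → ℕ)
    (hn : ∀ i, 0 < n i)
    (R : ∀ i j : Fin N, Matrix (Fin (n i) × Fin (n j)) (Fin (n i) × Fin (n j)) ℂ)
    (hR : ∀ i j, G.Adj i j → (R i j).IsHermitian)
    (hzs : ∀ X : ∀ i, Matrix (Fin (n i)) (Fin (n i)) ℂ,
      (∀ i, IsDensity (X i)) → ∑ i, payoff G n R X i = 0)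
    (A : ∀ i j : Fin N,
      Matrix (Fin (n j)) (Fin (n j)) ℂ →ₗ[ℂ] Matrix (Fin (n i)) (Fin (n i)) ℂ)
    (hA : ∀ (i j : Fin N) (S : Matrix (Fin (n j)) (Fin (n j)) ℂ)
      (T : Matrix (Fin (n i)) (Fin (n i)) ℂ), frob (A i j S) T = frob S (payoffOp (R j i) T))
    (Λ : ∀ i, Matrix (Fin (n i)) (Fin (n i)) ℂ) (hΛ : ∀ i, IsDensity (Λ i))
    (lam : Fin N → ℝ)
    (hlam : ∀ i, ((∑ j ∈ G.neighborFinset i, A i j (Λ j))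
      - (lam i : ℂ) • (1 : Matrix (Fin (n i)) (Fin (n i)) ℂ)).PosSemidef) :
    ∑ i, lam i ≤ 0 :=
  stmt10_general G n R hR hzs A hA Λ hΛ lam hlam

end
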